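/- arXiv:1007.1739 — 2 statements merged into one kernel-verified Lean document; each statement's English description precedes it below -/
import Mathlib

section
/- Fix a finite group L, an integer t ≥ 2, θ ∈ Aut(L) and ℓ ∈ L. Assume there exists x ∈ L such that θ(ℓ x ℓ^{-1}) = x, and set k = ord(x). If gcd(k, t) ≠ 1, k ∉ {2, 4} when t = 2, and k > 2 when t = 4, then the twisted homogeneous rack C_ℓ is of type D. -/
/-- A nonempty subset of `X` closed under the operation `op` (a subrack). -/
def IsSubrackOf {X : Type*} (op : X → X → X) (Y : Set X) : Prop :=
  Y.Nonempty ∧ ∀ a ∈ Y, ∀ b ∈ Y, op a b ∈ Y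

/-- The rack with underlying set `C ⊆ X` and operation `op` is of type D:
there is a decomposable subrack `R ⊔ S` of `C` and `r ∈ R`, `s ∈ S` with
`r ▹ (s ▹ (r ▹ s)) ≠ s`. -/
def IsTypeDOn {X : Type*} (op : X → X → X) (C : Set X) : Prop :=
  ∃ R S : Set X, R ⊆ C ∧ S ⊆ C ∧ IsSubrackOf op R ∧ IsSubrackOf op S ∧
    Disjoint R S ∧
    (∀ r ∈ R, ∀ s ∈ S, op r s ∈ S) ∧ (∀ s ∈ S, ∀ r ∈ R, op s r ∈ R) ∧
    ∃ r ∈ R, ∃ s ∈ S, op r (op s (op r s)) ≠ s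

/-- The automorphism `u` of `L^t`: `u(ℓ₁, …, ℓ_t) = (θ(ℓ_t), ℓ₁, …, ℓ_{t-1})`
(indices `0, …, t-1`, so coordinate `0` is `ℓ₁` and coordinate `t-1` is `ℓ_t`). -/
def thrU {L : Type*} [Group L] (θ : L ≃* L) (t : ℕ) (x : Fin t → L) : Fin t → L :=
  fun i => if (i : ℕ) = 0 then θ (x ⟨t - 1, by have := i.2; omega⟩)
    else x ⟨(i : ℕ) - 1, by have := i.2; omega⟩

/-- The rack operation `y ▹ z = y · u(z · y⁻¹)` on `L^t`. -/
def thrOp {L : Type*} [Group L] (θ : L ≃* L) (t : ℕ) (y z : Fin t → L) : Fin t → L :=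
  y * thrU θ t (z * y⁻¹)

/-- The element `(e, …, e, ℓ)` of `L^t`. -/
def thrBase {L : Type*} [Group L] (t : ℕ) (ℓ : L) : Fin t → L :=
  fun i => if (i : ℕ) = t - 1 then ℓ else 1

/-- The twisted conjugacy class (twisted homogeneous rack) of `x ∈ L^t`
with respect to `u`, i.e. the orbit of `x` under `g ⇀ x = g · x · u(g)⁻¹`. -/
def thrClassOf {L : Type*} [Group L] (θ : L ≃* L) (t : ℕ) (x : Fin t → L) :
    Set (Fin t → L) :=
  {y | ∃ g : Fin t → L, g * x * (thrU θ t g)⁻¹ = y}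

/-- The twisted homogeneous rack `C_ℓ = C_{(e,…,e,ℓ)}` of class `(L, t, θ)`. -/
def thrClass {L : Type*} [Group L] (θ : L ≃* L) (t : ℕ) (ℓ : L) : Set (Fin t → L) :=
  thrClassOf θ t (thrBase t ℓ)

/-- The twisted conjugacy class `O^{L,θ}_ℓ = {a·ℓ·θ(a)⁻¹ : a ∈ L}`. -/
def twConjClass {L : Type*} [Group L] (θ : L ≃* L) (ℓ : L) : Set L :=
  {k | ∃ a : L, a * ℓ * (θ a)⁻¹ = k}

/-!
Write `y_m = (x^{m₁}, …, x^{m_{t-1}}, ℓ x^{m_t})` for `m ∈ ℤ^t`. Because `θ(ℓxℓ⁻¹) = x`, these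
elements satisfy `y_m ▹ y_{m'} = y_{m + σ(m' - m)}` with `σ` the cyclic shift of coordinates.
For `d = gcd(ord x, t)` the weight `∑ i·mᵢ mod d` is therefore an invariant of the right-hand
argument as long as `d ∣ ∑ mᵢ`, and it only depends on `y_m`, since `m` is determined by `y_m`
modulo `ord x`. The level sets of the weight through `r = y_0` and `s = y_{e₁ - e₂}` (weights
`0` and `-1`) form a decomposable subrack, and comparing the first coordinates of
`r ▹ (s ▹ (r ▹ s))` and `s` shows that they differ unless `ord x` divides `-4, 1, -2, -1` for
`t = 2, 3, 4, ≥ 5` respectively.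
-/

section TwistedShift

variable {L : Type*} [Group L] (θ : L ≃* L)

theorem thrU_mul (t : ℕ) (g h : Fin t → L) :
    thrU θ t (g * h) = thrU θ t g * thrU θ t h := by
  funext i
  simp only [thrU, Pi.mul_apply]
  split_ifs <;> simp

theorem thrU_inv (t : ℕ) (g : Fin t → L) : thrU θ t g⁻¹ = (thrU θ t g)⁻¹ := by
  funext i
  simp only [thrU, Pi.inv_apply]
  split_ifs <;> simp

theorem thrU_apply {n : ℕ} (g : Fin (n + 1) → L) (i : Fin (n + 1)) :
    thrU θ (n + 1) g i = if i = 0 then θ (g (i - 1)) else g (i - 1) := by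
  rcases eq_or_ne i 0 with rfl | hi
  · simp only [thrU, Fin.val_zero, ↓reduceIte]
    congr 2
    ext
    rw [Fin.coe_sub_one, if_pos rfl]
    simp
  · have hi' : (i : ℕ) ≠ 0 := Fin.val_ne_iff.2 hi
    simp only [thrU, if_neg hi, if_neg hi']
    congr 1
    ext
    rw [Fin.coe_sub_one, if_neg hi]

theorem thrBase_apply {n : ℕ} (ℓ : L) (i : Fin (n + 1)) :
    thrBase (n + 1) ℓ i = if i = Fin.last n then ℓ else 1 := by
  simp [thrBase, Fin.ext_iff]

theorem thrBase_mem_thrClass (t : ℕ) (ℓ : L) : thrBase t ℓ ∈ thrClass θ t ℓ :=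
  ⟨1, by ext; simp [thrU]⟩

/-- `y ▹ z = (y z⁻¹) ⇀ z`. -/
theorem thrOp_mem_thrClassOf {t : ℕ} {w z : Fin t → L} (y : Fin t → L)
    (hz : z ∈ thrClassOf θ t w) : thrOp θ t y z ∈ thrClassOf θ t w := by
  obtain ⟨g, rfl⟩ := hz
  refine ⟨y * (g * w * (thrU θ t g)⁻¹)⁻¹ * g, ?_⟩
  simp only [thrOp, thrU_mul, thrU_inv]
  group

end TwistedShift

theorem isTypeDOn_of_invariant {M X A : Type*} {op : X → X → X} {C : Set X}
    (φ : M → X) (μ : M → M → M) (P : M → Prop) (F : M → A)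
    (hφ : ∀ m m', op (φ m) (φ m') = φ (μ m m'))
    (hPC : ∀ m, P m → φ m ∈ C) (hP : ∀ m m', P m → P m' → P (μ m m'))
    (hF : ∀ m m', P m → P m' → F (μ m m') = F m')
    (hφF : ∀ m m', φ m = φ m' → F m = F m')
    {r s : M} (hr : P r) (hs : P s) (hrs : F r ≠ F s)
    (hD : φ (μ r (μ s (μ r s))) ≠ φ s) : IsTypeDOn op C := by
  let level (a : A) : Set X := φ '' {m | P m ∧ F m = a}
  have hsub (a : A) : level a ⊆ C := by
    rintro _ ⟨m, ⟨hm, -⟩, rfl⟩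
    exact hPC m hm
  have hop (a b : A) : ∀ y ∈ level a, ∀ z ∈ level b, op y z ∈ level b := by
    rintro _ ⟨m, ⟨hm, -⟩, rfl⟩ _ ⟨m', ⟨hm', rfl⟩, rfl⟩
    exact ⟨μ m m', ⟨hP m m' hm hm', hF m m' hm hm'⟩, (hφ m m').symm⟩
  have hr' : φ r ∈ level (F r) := ⟨r, ⟨hr, rfl⟩, rfl⟩
  have hs' : φ s ∈ level (F s) := ⟨s, ⟨hs, rfl⟩, rfl⟩
  refine ⟨level (F r), level (F s), hsub _, hsub _, ⟨⟨_, hr'⟩, hop _ _⟩, ⟨⟨_, hs'⟩, hop _ _⟩,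
    ?_, hop _ _, hop _ _, φ r, hr', φ s, hs', ?_⟩
  · rw [Set.disjoint_left]
    rintro _ ⟨m, ⟨-, hm⟩, rfl⟩ ⟨m', ⟨-, hm'⟩, h⟩
    exact hrs (hm ▸ hm' ▸ (hφF m' m h).symm)
  · simpa only [hφ] using hD

section Exponents

variable {n : ℕ}

def expOp (m m' : Fin (n + 1) → ℤ) : Fin (n + 1) → ℤ :=
  fun i => m i + (m' (i - 1) - m (i - 1))

theorem sum_expOp (m m' : Fin (n + 1) → ℤ) : ∑ i, expOp m m' i = ∑ i, m' i := by
  have hshift (v : Fin (n + 1) → ℤ) : ∑ i, v (i - 1) = ∑ i, v i :=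
    Equiv.sum_comp (Equiv.subRight 1) v
  simp only [expOp, Finset.sum_add_distrib, Finset.sum_sub_distrib, hshift]
  ring

def expWeight (d : ℕ) (m : Fin (n + 1) → ℤ) : ZMod d :=
  ∑ i : Fin (n + 1), ((i : ℕ) : ZMod d) * (m i : ZMod d)

theorem Fin.natCast_val_add_one_of_dvd {d : ℕ} (hd : d ∣ n + 1) (i : Fin (n + 1)) :
    (((i + 1 : Fin (n + 1)) : ℕ) : ZMod d) = (i : ℕ) + 1 := by
  rw [Fin.val_add_one]
  split_ifs with h
  · have : ((n + 1 : ℕ) : ZMod d) = 0 := (ZMod.natCast_eq_zero_iff _ _).2 hd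
    simpa [h] using this.symm
  · push_cast; rfl

theorem sum_val_mul_comp_sub_one {d : ℕ} (hd : d ∣ n + 1) (v : Fin (n + 1) → ℤ) :
    ∑ i : Fin (n + 1), ((i : ℕ) : ZMod d) * (v (i - 1) : ZMod d) =
      expWeight d v + ∑ i, (v i : ZMod d) := by
  rw [← Equiv.sum_comp (Equiv.addRight 1)]
  simp only [Equiv.coe_addRight, add_sub_cancel_right, Fin.natCast_val_add_one_of_dvd hd, add_mul,
    one_mul, Finset.sum_add_distrib, expWeight]

theorem expWeight_expOp {d : ℕ} (hd : d ∣ n + 1) {m m' : Fin (n + 1) → ℤ}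
    (hsum : (d : ℤ) ∣ ∑ i, m' i - ∑ i, m i) : expWeight d (expOp m m') = expWeight d m' := by
  have hsum' : ∑ i, (m' i : ZMod d) - ∑ i, (m i : ZMod d) = 0 := by
    simpa using (ZMod.intCast_zmod_eq_zero_iff_dvd _ d).2 hsum
  have key := sum_val_mul_comp_sub_one hd (m' - m)
  simp only [expWeight, expOp, Pi.sub_apply, Int.cast_add, Int.cast_sub, mul_add, mul_sub,
    Finset.sum_add_distrib, Finset.sum_sub_distrib] at key ⊢
  linear_combination key + hsum'

theorem expWeight_congr {d : ℕ} {m m' : Fin (n + 1) → ℤ} (h : ∀ i, (d : ℤ) ∣ m i - m' i) :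
    expWeight d m = expWeight d m' := by
  refine Finset.sum_congr rfl fun i _ => congrArg _ ?_
  rw [(ZMod.intCast_eq_intCast_iff_dvd_sub _ _ _).2 (dvd_sub_comm.1 (h i))]

theorem expWeight_single_sub_single (d : ℕ) :
    expWeight d (Pi.single 0 1 - Pi.single 1 1 : Fin (n + 2) → ℤ) = -1 := by
  simp [expWeight, Pi.single_apply, mul_sub]

theorem expOp_single_sub_single_defect :
    let s : Fin (n + 2) → ℤ := Pi.single 0 1 - Pi.single 1 1
    expOp 0 (expOp s (expOp 0 s)) 0 - s 0 =
      if n = 0 then -4 else if n = 1 then 1 else if n = 2 then -2 else -1 := by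
  obtain rfl | hn := eq_or_ne n 0
  · decide
  have e1 : ((0 - 1 : Fin (n + 2)) : ℕ) = n + 1 := by rw [Fin.coe_sub_one]; simp
  have e2 : ((0 - 1 - 1 : Fin (n + 2)) : ℕ) = n := by
    rw [Fin.coe_sub_one, if_neg (by simp), e1]; rfl
  have e3 : ((0 - 1 - 1 - 1 : Fin (n + 2)) : ℕ) = n - 1 := by
    rw [Fin.coe_sub_one, if_neg (by rw [Fin.ext_iff, e2]; exact hn), e2]
  simp only [expOp, Pi.zero_apply, Pi.sub_apply, Pi.single_apply, Fin.ext_iff, e1, e2, e3,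
    Fin.val_zero, Fin.val_one, if_true, zero_ne_one, if_false, hn]
  split_ifs <;> first | omega | contradiction

end Exponents

theorem not_dvd_single_sub_single_defect {k n : ℕ} (hk : k ≠ 1)
    (h2 : n + 2 = 2 → k ≠ 2 ∧ k ≠ 4) (h4 : n + 2 = 4 → 2 < k) :
    ¬ (k : ℤ) ∣ if n = 0 then -4 else if n = 1 then 1 else if n = 2 then -2 else -1 := by
  rw [Int.natCast_dvd]
  intro hdvd
  have hle := Nat.le_of_dvd (by split_ifs <;> decide) hdvd
  split_ifs at hdvd hle with h0 h1 h2'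
  · have := h2 (by omega)
    interval_cases k <;> omega
  · interval_cases k <;> omega
  · have := h4 (by omega)
    omega
  · interval_cases k <;> omega

section ZPow

variable {L : Type*} [Group L] (θ : L ≃* L) (ℓ x : L)

def thrZPow (t : ℕ) (m : Fin t → ℤ) : Fin t → L :=
  thrBase t ℓ * fun i => x ^ m i

theorem thrZPow_zero (t : ℕ) : thrZPow ℓ x t 0 = thrBase t ℓ := by
  ext
  simp [thrZPow]

theorem dvd_sub_of_thrZPow_eq {t : ℕ} {m m' : Fin t → ℤ} (h : thrZPow ℓ x t m = thrZPow ℓ x t m')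
    (i : Fin t) : (orderOf x : ℤ) ∣ m i - m' i :=
  (zpow_eq_zpow_iff_modEq.1 (mul_left_cancel (congrFun h i))).symm.dvd

theorem map_conj_zpow_of_map_conj (hx : θ (ℓ * x * ℓ⁻¹) = x) (a : ℤ) :
    θ (ℓ * x ^ a * ℓ⁻¹) = x ^ a := by
  rw [← conj_zpow, map_zpow, hx]

theorem thrOp_thrZPow {n : ℕ} (hx : θ (ℓ * x * ℓ⁻¹) = x) (m m' : Fin (n + 1) → ℤ) :
    thrOp θ (n + 1) (thrZPow ℓ x (n + 1) m) (thrZPow ℓ x (n + 1) m') =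
      thrZPow ℓ x (n + 1) (expOp m m') := by
  funext i
  simp only [thrOp, thrZPow, Pi.mul_apply, Pi.inv_apply, thrU_apply, expOp, zpow_add, zpow_sub]
  rcases eq_or_ne i 0 with rfl | hi
  · have hlast : (0 - 1 : Fin (n + 1)) = Fin.last n :=
      sub_eq_iff_eq_add.2 (Fin.last_add_one n).symm
    have hconj (a b : ℤ) : ℓ * x ^ a * (ℓ * x ^ b)⁻¹ = ℓ * x ^ (a - b) * ℓ⁻¹ := by group
    rw [if_pos rfl, hlast, thrBase_apply ℓ (Fin.last n), if_pos rfl, hconj,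
      map_conj_zpow_of_map_conj θ ℓ x hx, zpow_sub, mul_assoc]
  · have hlast : i - 1 ≠ Fin.last n := by
      intro h
      apply hi
      rw [← sub_add_cancel i 1, h, Fin.last_add_one]
    rw [if_neg hi, thrBase_apply ℓ (i - 1), if_neg hlast]
    group

theorem thrZPow_single_sub_single_mem_thrClass (n : ℕ) :
    thrZPow ℓ x (n + 2) (Pi.single 0 1 - Pi.single 1 1) ∈ thrClass θ (n + 2) ℓ := by
  refine ⟨Pi.mulSingle 0 x, funext fun i => ?_⟩
  simp only [thrZPow, Pi.mul_apply, Pi.inv_apply, thrU_apply, thrBase_apply,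
    Pi.mulSingle_apply, Pi.sub_apply, Pi.single_apply, sub_eq_zero]
  split_ifs <;> simp_all

end ZPow

theorem thrClass_isTypeD_of_orderOf_general {L : Type*} [Group L]
    (θ : L ≃* L) (t : ℕ) (ht : 2 ≤ t) (ℓ x : L)
    (hx : θ (ℓ * x * ℓ⁻¹) = x)
    (hgcd : Nat.gcd (orderOf x) t ≠ 1)
    (h2 : t = 2 → orderOf x ≠ 2 ∧ orderOf x ≠ 4)
    (h4 : t = 4 → 2 < orderOf x) :
    IsTypeDOn (thrOp θ t) (thrClass θ t ℓ) := by
  obtain ⟨n, rfl⟩ : ∃ n, t = n + 2 := ⟨t - 2, by omega⟩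
  have hk : orderOf x ≠ 1 := fun h => hgcd (by rw [h, Nat.gcd_one_left])
  set d := Nat.gcd (orderOf x) (n + 2)
  have : Fact (1 < d) :=
    ⟨Nat.lt_of_le_of_ne (Nat.gcd_pos_of_pos_right _ (by omega)) (Ne.symm hgcd)⟩
  refine isTypeDOn_of_invariant (thrZPow ℓ x (n + 2)) expOp
    (fun m => thrZPow ℓ x (n + 2) m ∈ thrClass θ (n + 2) ℓ ∧ (d : ℤ) ∣ ∑ i, m i) (expWeight d)
    (thrOp_thrZPow θ ℓ x hx) (fun _ hm => hm.1) ?_ ?_ ?_ (r := 0)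
    (s := Pi.single 0 1 - Pi.single 1 1) ?_ ?_ ?_ ?_
  · rintro m m' - ⟨hm', hsum⟩
    exact ⟨thrOp_thrZPow θ ℓ x hx m m' ▸ thrOp_mem_thrClassOf θ _ hm', (sum_expOp m m').symm ▸ hsum⟩
  · exact fun m m' hm hm' => expWeight_expOp (Nat.gcd_dvd_right _ _) (dvd_sub hm'.2 hm.2)
  · exact fun m m' h => expWeight_congr fun i =>
      (Int.natCast_dvd_natCast.2 (Nat.gcd_dvd_left _ _)).trans (dvd_sub_of_thrZPow_eq ℓ x h i)
  · exact ⟨thrZPow_zero ℓ x (n + 2) ▸ thrBase_mem_thrClass θ (n + 2) ℓ, by simp⟩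
  · exact ⟨thrZPow_single_sub_single_mem_thrClass θ ℓ x n, by simp⟩
  · rw [expWeight_single_sub_single]
    simp [expWeight]
  · intro h
    have hdefect := dvd_sub_of_thrZPow_eq ℓ x h 0
    rw [expOp_single_sub_single_defect] at hdefect
    exact not_dvd_single_sub_single_defect hk h2 h4 hdefect

/-- Lemma 3.7: if there is `x ∈ L` with `θ(ℓxℓ⁻¹) = x`, `k = ord(x)`,
`gcd(k,t) ≠ 1`, `k ∉ {2,4}` when `t = 2`, and `k > 2` when `t = 4`,
then `C_ℓ` is of type D. -/
theorem thrClass_isTypeD_of_orderOf {L : Type*} [Group L] [Fintype L]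
    (θ : L ≃* L) (t : ℕ) (ht : 2 ≤ t) (ℓ x : L)
    (hx : θ (ℓ * x * ℓ⁻¹) = x)
    (hgcd : Nat.gcd (orderOf x) t ≠ 1)
    (h2 : t = 2 → orderOf x ≠ 2 ∧ orderOf x ≠ 4)
    (h4 : t = 4 → 2 < orderOf x) :
    IsTypeDOn (thrOp θ t) (thrClass θ t ℓ) :=
  thrClass_isTypeD_of_orderOf_general θ t ht ℓ x hx hgcd h2 h4
end

section
/- Let L be a finite group, t = 2 and θ = id, and let ℓ ∈ L with ord(ℓ) = 2m where m is odd and m > 1. Then the twisted homogeneous rack C_ℓ of class (L, 2, id) is of type D. -/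
/-- The element `(ℓ^i, ℓ^{1-i})` of `L²`; these form a dihedral subrack. -/
def thrP {L : Type*} [Group L] (ℓ : L) (i : ℤ) : Fin 2 → L :=
  fun j => if (j : ℕ) = 0 then ℓ ^ i else ℓ ^ (1 - i)

lemma thrOp_thrP {L : Type*} [Group L] (ℓ : L) (i j : ℤ) :
    thrOp (MulEquiv.refl L) 2 (thrP ℓ i) (thrP ℓ j) = thrP ℓ (2 * i - j) := by
  funext k
  fin_cases k <;>
    simp [thrOp, thrU, thrP, Pi.mul_apply, Pi.inv_apply, ← zpow_neg, ← zpow_add] <;>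
    congr 1 <;> ring

lemma thrP_mem_thrClass {L : Type*} [Group L] (ℓ : L) (i : ℤ) :
    thrP ℓ i ∈ thrClass (MulEquiv.refl L) 2 ℓ := by
  refine ⟨fun j => if (j : ℕ) = 0 then ℓ ^ i else 1, ?_⟩
  funext k
  fin_cases k <;>
    simp [thrU, thrP, thrBase, Pi.mul_apply, Pi.inv_apply, ← zpow_neg, ← zpow_add,
      ← zpow_one_add] <;> congr 1 <;> ring

/-- If `thrP ℓ i = thrP ℓ j` then `i ≡ j` modulo the order of `ℓ`. -/
lemma thrP_inj_mod {L : Type*} [Group L] (ℓ : L) {i j : ℤ}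
    (h : thrP ℓ i = thrP ℓ j) : i ≡ j [ZMOD orderOf ℓ] := by
  have h0 : ℓ ^ i = ℓ ^ j := by
    have := congrFun h 0
    simpa [thrP] using this
  exact zpow_eq_zpow_iff_modEq.mp h0

/-- Corollary 3.9: `t = 2`, `θ = id`. If `ord(ℓ) = 2m` with `m` odd, `m > 1`,
then `C_ℓ` is of type D. -/
theorem thrClass_isTypeD_t2_id_order_two_mul_odd {L : Type*} [Group L] [Fintype L]
    (ℓ : L) (m : ℕ) (hm : Odd m) (hm1 : 1 < m) (hord : orderOf ℓ = 2 * m) :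
    IsTypeDOn (thrOp (MulEquiv.refl L) 2) (thrClass (MulEquiv.refl L) 2 ℓ) := by
  classical
  have hm3 : 3 ≤ m := by
    obtain ⟨k, hk⟩ := hm; omega
  -- parity separation
  have hsep : ∀ {i j : ℤ}, Even i → Odd j → thrP ℓ i ≠ thrP ℓ j := by
    intro i j hi hj h
    have hmod : i ≡ j [ZMOD orderOf ℓ] := thrP_inj_mod ℓ h
    rw [hord] at hmod
    have hdvd : ((2 * m : ℕ) : ℤ) ∣ j - i := Int.ModEq.dvd hmod
    have h2 : (2 : ℤ) ∣ j - i := by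
      refine dvd_trans ⟨(m : ℤ), by push_cast; ring⟩ hdvd
    have hodd : Odd (j - i) := hj.sub_even hi
    exact (Int.not_odd_iff_even.mpr (even_iff_two_dvd.mpr h2)) hodd
  refine ⟨thrP ℓ '' {i | Even i}, thrP ℓ '' {i | Odd i}, ?_, ?_, ?_, ?_, ?_, ?_, ?_, ?_⟩
  · rintro _ ⟨i, -, rfl⟩; exact thrP_mem_thrClass ℓ i
  · rintro _ ⟨i, -, rfl⟩; exact thrP_mem_thrClass ℓ i
  · refine ⟨⟨thrP ℓ 0, ⟨0, Even.zero, rfl⟩⟩, ?_⟩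
    rintro _ ⟨i, hi, rfl⟩ _ ⟨j, hj, rfl⟩
    refine ⟨2 * i - j, ?_, (thrOp_thrP ℓ i j).symm⟩
    obtain ⟨a, ha⟩ := hi; obtain ⟨b, hb⟩ := hj
    exact ⟨2 * a - b, by omega⟩
  · refine ⟨⟨thrP ℓ 1, ⟨1, odd_one, rfl⟩⟩, ?_⟩
    rintro _ ⟨i, hi, rfl⟩ _ ⟨j, hj, rfl⟩
    refine ⟨2 * i - j, ?_, (thrOp_thrP ℓ i j).symm⟩
    obtain ⟨a, ha⟩ := hi; obtain ⟨b, hb⟩ := hj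
    exact ⟨i - b - 1, by omega⟩
  · rw [Set.disjoint_left]
    rintro _ ⟨i, hi, rfl⟩ ⟨j, hj, hj'⟩
    exact hsep hi hj hj'.symm
  · rintro _ ⟨i, hi, rfl⟩ _ ⟨j, hj, rfl⟩
    refine ⟨2 * i - j, ?_, (thrOp_thrP ℓ i j).symm⟩
    obtain ⟨a, ha⟩ := hi; obtain ⟨b, hb⟩ := hj
    exact ⟨i - b - 1, by omega⟩
  · rintro _ ⟨i, hi, rfl⟩ _ ⟨j, hj, rfl⟩
    refine ⟨2 * i - j, ?_, (thrOp_thrP ℓ i j).symm⟩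
    obtain ⟨a, ha⟩ := hi; obtain ⟨b, hb⟩ := hj
    exact ⟨i - b, by omega⟩
  · refine ⟨thrP ℓ 0, ⟨0, Even.zero, rfl⟩, thrP ℓ 1, ⟨1, odd_one, rfl⟩, ?_⟩
    rw [thrOp_thrP, thrOp_thrP, thrOp_thrP]
    norm_num
    intro h
    have hmod := thrP_inj_mod ℓ h
    rw [hord] at hmod
    have hdvd : ((2 * m : ℕ) : ℤ) ∣ 1 - (-3) := Int.ModEq.dvd hmod
    have h4 : (2 * m : ℤ) ∣ 4 := by push_cast at hdvd ⊢; omega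
    have := Int.le_of_dvd (by norm_num) h4
    omega
end
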